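/- Define linear operators 𝒞, 𝒟 : ℚ[x] → ℚ[x] by 𝒞(x^n) = x^{n+1} - x^{n-1} for n ≥ 2, 𝒞(x^n) = x^{n+1} for n ∈ {0,1}; 𝒟(x^2) = -1, 𝒟(1) = 1, 𝒟(x^n) = 0 otherwise. Then 𝒞(𝒬_n(x)) = 𝒬_{n+1}(x) for all n ≥ 0, and 𝒟(𝒬_n(x)) = 0 for odd n, while 𝒟(𝒬_n(x)) = (-1)^{n/2} C_{n/2} for even n, where C_k is the k-th Catalan number. -/

import Mathlib

open Polynomial

/-- The binomial coefficient `C(a,b)` for integer arguments, with the convention that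
`C(a,b) = 0` unless `0 ≤ b ≤ a`. -/
def Cb (a b : ℤ) : ℚ :=
  if 0 ≤ b ∧ b ≤ a then (a.toNat.choose b.toNat : ℚ) else 0

/-- `𝒬_0(x) = 1` and
`𝒬_n(x) = Σ_{j=0}^{⌊(n-1)/2⌋} (-1)^j (C(n-1,j) - C(n-1,j-1)) x^{n-2j}` for `n ≥ 1`. -/
noncomputable def QQ : ℕ → Polynomial ℚ
  | 0 => 1
  | (n + 1) =>
      ∑ j ∈ Finset.range (n / 2 + 1),
        Polynomial.C ((-1 : ℚ) ^ j * (Cb n j - Cb n ((j : ℤ) - 1))) *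
          Polynomial.X ^ (n + 1 - 2 * j)

/-!
Write `𝒬_{m+1} = Σ_j a(m,j) x^{m+1-2j}` with `a(m,j) = (-1)^j (C(m,j) - C(m,j-1))`. Pascal's rule
gives `a(m+1,j+1) = a(m,j+1) - a(m,j)`, which is exactly what applying `𝒞` termwise
(`x^k ↦ x^{k+1} - x^{k-1}`) produces. The boundary causes no trouble: for `m` even the lowest
term is `x`, which `𝒞` sends to `x^2` alone, and for `m` odd the coefficient `a(m, (m+1)/2)` of the
would-be constant term vanishes by the symmetry of binomial coefficients. `𝒟` only sees the
`x^2`-coefficient of `𝒬_{2t+2}`, namely `(-1)^t (C(2t+1,t) - C(2t+1,t-1)) = (-1)^t C_{t+1}`.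
-/

open Finset

lemma Cb_natCast (n k : ℕ) : Cb n k = n.choose k := by
  unfold Cb
  split_ifs with h
  · simp
  · rw [Nat.choose_eq_zero_of_lt (by omega), Nat.cast_zero]

lemma Cb_of_neg (a : ℤ) {b : ℤ} (hb : b < 0) : Cb a b = 0 :=
  if_neg (by omega)

lemma Cb_succ (m : ℕ) (b : ℤ) : Cb ((m : ℤ) + 1) b = Cb m b + Cb m (b - 1) := by
  obtain hb | ⟨k, rfl⟩ := lt_or_ge b 0 |>.imp_right Int.eq_ofNat_of_zero_le
  · rw [Cb_of_neg _ hb, Cb_of_neg _ hb, Cb_of_neg _ (by omega), add_zero]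
  · rw [← Nat.cast_succ m]
    rcases k with _ | k
    · rw [Cb_of_neg _ (show ((0 : ℕ) : ℤ) - 1 < 0 by omega), add_zero, Cb_natCast, Cb_natCast,
        Nat.choose_zero_right, Nat.choose_zero_right]
    · rw [Nat.cast_succ k, add_sub_cancel_right, ← Nat.cast_succ, Cb_natCast, Cb_natCast,
        Cb_natCast, Nat.choose_succ_succ', Nat.cast_add, add_comm]

/-- The coefficient `a(m,j)` of `x^{m+1-2j}` in `𝒬_{m+1}`. -/
noncomputable def qCoeff (m j : ℕ) : ℚ := (-1) ^ j * (Cb m j - Cb m ((j : ℤ) - 1))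

lemma qCoeff_zero (m : ℕ) : qCoeff m 0 = 1 := by
  simp [qCoeff, Cb]

lemma qCoeff_succ_succ (m j : ℕ) : qCoeff (m + 1) (j + 1) = qCoeff m (j + 1) - qCoeff m j := by
  simp only [qCoeff, Nat.cast_succ, Cb_succ, add_sub_cancel_right, pow_succ]
  ring

lemma qCoeff_succ (m j : ℕ) :
    qCoeff m (j + 1) = (-1) ^ (j + 1) * (m.choose (j + 1) - m.choose j : ℚ) := by
  rw [qCoeff, Nat.cast_succ j, add_sub_cancel_right, ← Nat.cast_succ, Cb_natCast, Cb_natCast]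

lemma qCoeff_half (t : ℕ) : qCoeff (2 * t + 1) (t + 1) = 0 := by
  rw [qCoeff_succ, Nat.choose_symm_half, sub_self, mul_zero]

lemma cast_catalan_add_two_eq_choose_sub (s : ℕ) :
    (catalan (s + 2) : ℚ) = (2 * s + 3).choose (s + 1) - (2 * s + 3).choose s := by
  have hcentral : (s + 3) * catalan (s + 2) = 2 * (2 * s + 3).choose (s + 1) := by
    rw [succ_mul_catalan_eq_centralBinom, Nat.centralBinom,
      show 2 * (s + 2) = 2 * s + 3 + 1 by ring, Nat.choose_succ_succ',
      show 2 * s + 3 = 2 * (s + 1) + 1 by ring, Nat.choose_symm_half]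
    ring
  have hratio : (2 * s + 3).choose (s + 1) * (s + 1) = (2 * s + 3).choose s * (s + 3) := by
    rw [Nat.choose_succ_right_eq, show 2 * s + 3 - s = s + 3 by omega]
  have hcentral' : ((s : ℚ) + 3) * catalan (s + 2) = 2 * (2 * s + 3).choose (s + 1) := by
    exact_mod_cast hcentral
  have hratio' : ((2 * s + 3).choose (s + 1) : ℚ) * (s + 1) = (2 * s + 3).choose s * (s + 3) := by
    exact_mod_cast hratio
  refine mul_left_cancel₀ (show (s : ℚ) + 3 ≠ 0 by positivity) ?_
  linear_combination hcentral' - hratio'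

lemma qCoeff_middle (t : ℕ) : qCoeff (2 * t + 1) t = (-1) ^ t * catalan (t + 1) := by
  rcases t with _ | s
  · simp [qCoeff, Cb]
  · rw [qCoeff_succ, cast_catalan_add_two_eq_choose_sub, show 2 * (s + 1) + 1 = 2 * s + 3 by ring]

lemma QQ_succ (m : ℕ) :
    QQ (m + 1) = ∑ j ∈ range (m / 2 + 1), qCoeff m j • (X : ℚ[X]) ^ (m + 1 - 2 * j) :=
  sum_congr rfl fun _ _ => (smul_eq_C_mul _).symm

lemma QQ_zero : QQ 0 = X ^ 0 := by
  rw [pow_zero, QQ]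

/-- Pascal's rule for `qCoeff`, summed against the powers of `X`. -/
lemma sum_qCoeff_succ (m N : ℕ) :
    ∑ j ∈ range (N + 1), qCoeff (m + 1) j • (X : ℚ[X]) ^ (m + 2 - 2 * j) =
      ∑ j ∈ range (N + 1), qCoeff m j • X ^ (m + 2 - 2 * j) -
        ∑ j ∈ range N, qCoeff m j • X ^ (m - 2 * j) := by
  have hshift (j : ℕ) : m + 2 - 2 * (j + 1) = m - 2 * j := by omega
  simp only [sum_range_succ' _ N, qCoeff_zero, qCoeff_succ_succ, sub_smul, sum_sub_distrib, hshift]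
  abel

section Operators

variable (Cop Dop : ℚ[X] →ₗ[ℚ] ℚ[X])

lemma Cop_sum_smul_X_pow
    (hC2 : ∀ n : ℕ, 2 ≤ n → Cop ((X : ℚ[X]) ^ n) = X ^ (n + 1) - X ^ (n - 1))
    (c : ℕ → ℚ) {m N : ℕ} (hN : 2 * N ≤ m + 1) :
    Cop (∑ j ∈ range N, c j • (X : ℚ[X]) ^ (m + 1 - 2 * j)) =
      ∑ j ∈ range N, c j • X ^ (m + 2 - 2 * j) - ∑ j ∈ range N, c j • X ^ (m - 2 * j) := by
  rw [map_sum, ← sum_sub_distrib]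
  refine sum_congr rfl fun j hj => ?_
  have hj : j < N := mem_range.mp hj
  rw [map_smul, hC2 _ (by omega), smul_sub, show m + 1 - 2 * j + 1 = m + 2 - 2 * j by omega,
    show m + 1 - 2 * j - 1 = m - 2 * j by omega]

lemma Cop_QQ_two_mul_add_one (hC1 : Cop (X ^ 1) = X ^ 2)
    (hC2 : ∀ n : ℕ, 2 ≤ n → Cop ((X : ℚ[X]) ^ n) = X ^ (n + 1) - X ^ (n - 1)) (t : ℕ) :
    Cop (QQ (2 * t + 1)) = QQ (2 * t + 2) := by
  rw [QQ_succ, QQ_succ, show 2 * t / 2 = t by omega, show (2 * t + 1) / 2 = t by omega,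
    sum_qCoeff_succ, sum_range_succ, sum_range_succ _ t, map_add,
    Cop_sum_smul_X_pow Cop hC2 _ (by omega), map_smul, show 2 * t + 1 - 2 * t = 1 by omega,
    hC1, show 2 * t + 2 - 2 * t = 2 by omega]
  abel

lemma Cop_QQ_two_mul_add_two
    (hC2 : ∀ n : ℕ, 2 ≤ n → Cop ((X : ℚ[X]) ^ n) = X ^ (n + 1) - X ^ (n - 1)) (t : ℕ) :
    Cop (QQ (2 * t + 2)) = QQ (2 * t + 3) := by
  rw [QQ_succ, QQ_succ, show (2 * t + 1) / 2 = t by omega, show (2 * t + 2) / 2 = t + 1 by omega,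
    sum_qCoeff_succ (2 * t + 1) (t + 1), sum_range_succ _ (t + 1), qCoeff_half, zero_smul, add_zero,
    Cop_sum_smul_X_pow Cop hC2 _ (by omega)]

lemma Dop_QQ_two_mul_add_one (hD : ∀ n : ℕ, n ≠ 0 → n ≠ 2 → Dop ((X : ℚ[X]) ^ n) = 0) (t : ℕ) :
    Dop (QQ (2 * t + 1)) = 0 := by
  rw [QQ_succ, map_sum]
  refine sum_eq_zero fun j hj => ?_
  have hj : j < 2 * t / 2 + 1 := mem_range.mp hj
  rw [map_smul, hD _ (by omega) (by omega), smul_zero]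

lemma Dop_QQ_two_mul_add_two (hD2 : Dop ((X : ℚ[X]) ^ 2) = -1)
    (hD : ∀ n : ℕ, n ≠ 0 → n ≠ 2 → Dop ((X : ℚ[X]) ^ n) = 0) (t : ℕ) :
    Dop (QQ (2 * t + 2)) = C ((-1 : ℚ) ^ (t + 1) * catalan (t + 1)) := by
  have hlower : ∀ j ∈ range t,
      Dop (qCoeff (2 * t + 1) j • (X : ℚ[X]) ^ (2 * t + 1 + 1 - 2 * j)) = 0 := fun j hj => by
    have hj : j < t := mem_range.mp hj
    rw [map_smul, hD _ (by omega) (by omega), smul_zero]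
  rw [QQ_succ, show (2 * t + 1) / 2 = t by omega, map_sum, sum_range_succ, sum_eq_zero hlower,
    zero_add, show 2 * t + 1 + 1 - 2 * t = 2 by omega, map_smul, hD2, qCoeff_middle, smul_neg,
    ← C_1, smul_C, smul_eq_mul, mul_one, ← C_neg, pow_succ]
  congr 1
  ring

end Operators

/-- If `𝒞, 𝒟` are the linear operators of Definition 5.1, then `𝒞(𝒬_n) = 𝒬_{n+1}`,
`𝒟(𝒬_n) = 0` for odd `n`, and `𝒟(𝒬_n) = (-1)^{n/2} C_{n/2}` for even `n`, where
`C_k` is the `k`-th Catalan number. -/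
theorem stmt9 (Cop Dop : Polynomial ℚ →ₗ[ℚ] Polynomial ℚ)
    (hC2 : ∀ n : ℕ, 2 ≤ n →
      Cop (Polynomial.X ^ n) = Polynomial.X ^ (n + 1) - Polynomial.X ^ (n - 1))
    (hC0 : Cop (Polynomial.X ^ 0) = Polynomial.X ^ 1)
    (hC1 : Cop (Polynomial.X ^ 1) = Polynomial.X ^ 2)
    (hD2 : Dop (Polynomial.X ^ 2) = -1)
    (hD0 : Dop (Polynomial.X ^ 0) = 1)
    (hD : ∀ n : ℕ, n ≠ 0 → n ≠ 2 → Dop (Polynomial.X ^ n) = 0) :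
    ∀ n : ℕ,
      Cop (QQ n) = QQ (n + 1) ∧
        (Odd n → Dop (QQ n) = 0) ∧
        (Even n →
          Dop (QQ n) = Polynomial.C ((-1 : ℚ) ^ (n / 2) * (catalan (n / 2) : ℚ))) := by
  intro n
  obtain ⟨t, rfl | rfl⟩ := Nat.even_or_odd' n
  · refine ⟨?_, fun hodd => absurd hodd (Nat.not_odd_iff_even.mpr (even_two_mul t)), fun _ => ?_⟩
    · rcases t with _ | t
      · rw [QQ_zero, hC0, QQ_succ]
        simp [qCoeff_zero]
      · exact Cop_QQ_two_mul_add_two Cop hC2 t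
    · rcases t with _ | t
      · rw [QQ_zero, hD0]
        simp
      · rw [show 2 * (t + 1) / 2 = t + 1 by omega]
        exact Dop_QQ_two_mul_add_two Dop hD2 hD t
  · refine ⟨Cop_QQ_two_mul_add_one Cop hC1 hC2 t, fun _ => Dop_QQ_two_mul_add_one Dop hD t,
      fun heven => absurd heven (Nat.not_even_iff_odd.mpr (odd_two_mul_add_one t))⟩
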